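/- arXiv:0904.1551 — 2 statements merged into one kernel-verified Lean document; each statement's English description precedes it below -/
import Mathlib

section
/- Let H be a finite nonempty set with a distinguished element ι, let L : H × H → ℝ and M : H × H → ℝ have strictly positive entries, let ψ : H → (0,∞), and define L' by L'(a,b) = ψ(b) · Σ_{e∈H} L(a,e) M(e,b). For a matrix K with positive entries define λ_a(K) = (Σ_{b∈H} K(a,b))/(Σ_{b∈H} K(ι,b)). Then for every a ∈ H, |λ_a(L) − λ_a(L')| ≤ 2Δ(L) + Δ(L'). Moreover, λ_a(L), λ_a(L'), and L'(a,b)/L'(ι,b) (for every b) all lie in the interval [min_{e∈H} L(a,e)/L(ι,e), max_{e∈H} L(a,e)/L(ι,e)]. -/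
/-!
`λ_a(L)`, `λ_a(L')` and `L'(a,b)/L'(ι,b)` are all mediants `∑ L(a,e) w_e / ∑ L(ι,e) w_e` of the
ratios `L(a,e)/L(ι,e)` with positive weights `w_e` (namely `1`, `∑_b ψ(b) M(e,b)` and `M(e,b)`),
so they lie between the smallest and the largest of these ratios. That interval has length at most
`Δ(L)`, whence `|λ_a(L) − λ_a(L')| ≤ Δ(L) ≤ 2Δ(L) + Δ(L')`.
-/

/-- For a matrix `K : H × H → ℝ` with positive entries,
`Delta K = max_{a,b,c,d} |K b c / K a c − K b d / K a d|`. -/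
noncomputable def Delta {H : Type*} [Fintype H] [Nonempty H] (K : H → H → ℝ) : ℝ :=
  Finset.univ.sup' Finset.univ_nonempty fun x : (H × H) × H × H =>
    |K x.1.2 x.2.1 / K x.1.1 x.2.1 - K x.1.2 x.2.2 / K x.1.1 x.2.2|

/-- `lamRatio ι K a = (∑_b K a b) / (∑_b K ι b)`. -/
noncomputable def lamRatio {H : Type*} [Fintype H] (ι : H) (K : H → H → ℝ) (a : H) : ℝ :=
  (∑ b, K a b) / (∑ b, K ι b)

theorem sum_mul_div_sum_mul_mem_Icc {α : Type*} {s : Finset α} (hs : s.Nonempty)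
    (u v w : α → ℝ) (hv : ∀ e ∈ s, 0 < v e) (hw : ∀ e ∈ s, 0 < w e) :
    (∑ e ∈ s, u e * w e) / (∑ e ∈ s, v e * w e) ∈
      Set.Icc (s.inf' hs fun e => u e / v e) (s.sup' hs fun e => u e / v e) := by
  have hden : 0 < ∑ e ∈ s, v e * w e := Finset.sum_pos (fun e he => mul_pos (hv e he) (hw e he)) hs
  constructor
  · rw [le_div_iff₀ hden, Finset.mul_sum]
    refine Finset.sum_le_sum fun e he => ?_
    rw [← mul_assoc]
    exact mul_le_mul_of_nonneg_right ((le_div_iff₀ (hv e he)).1 (s.inf'_le _ he)) (hw e he).le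
  · rw [div_le_iff₀ hden, Finset.mul_sum]
    refine Finset.sum_le_sum fun e he => ?_
    rw [← mul_assoc]
    exact mul_le_mul_of_nonneg_right
      ((div_le_iff₀ (hv e he)).1 (s.le_sup' (fun e => u e / v e) he)) (hw e he).le

theorem sum_mul_sum_comm {α β R : Type*} [Fintype α] [Fintype β] [CommSemiring R]
    (f : β → R) (g : α → R) (h : α → β → R) :
    ∑ b, f b * ∑ e, g e * h e b = ∑ e, g e * ∑ b, f b * h e b := by
  simp only [Finset.mul_sum]
  rw [Finset.sum_comm]
  simp only [mul_left_comm]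

section Delta

variable {H : Type*} [Fintype H] [Nonempty H]

theorem le_Delta (K : H → H → ℝ) (a b c d : H) :
    |K b c / K a c - K b d / K a d| ≤ Delta K :=
  Finset.le_sup' (fun x : (H × H) × H × H =>
    |K x.1.2 x.2.1 / K x.1.1 x.2.1 - K x.1.2 x.2.2 / K x.1.1 x.2.2|)
    (Finset.mem_univ ((a, b), c, d))

theorem Delta_nonneg (K : H → H → ℝ) : 0 ≤ Delta K := by
  obtain ⟨x⟩ := ‹Nonempty H›
  simpa only [sub_self, abs_zero] using le_Delta K x x x x

theorem sup'_sub_inf'_le_Delta (K : H → H → ℝ) (ι a : H) :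
    (Finset.univ.sup' Finset.univ_nonempty fun e => K a e / K ι e) -
        (Finset.univ.inf' Finset.univ_nonempty fun e => K a e / K ι e) ≤ Delta K := by
  obtain ⟨c, -, hc⟩ := Finset.exists_mem_eq_sup' Finset.univ_nonempty fun e => K a e / K ι e
  obtain ⟨d, -, hd⟩ := Finset.exists_mem_eq_inf' Finset.univ_nonempty fun e => K a e / K ι e
  rw [hc, hd]
  exact (le_abs_self _).trans (le_Delta K ι a c d)

end Delta

/-- Let `H` be finite nonempty with distinguished element `ι`, `L`,
`M : H × H → ℝ` with strictly positive entries, `ψ : H → (0,∞)`, and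
`L' a b = ψ b · ∑_e L a e · M e b`.  With `λ_a K = (∑_b K a b)/(∑_b K ι b)`, for every
`a ∈ H` one has `|λ_a L − λ_a L'| ≤ 2 Δ(L) + Δ(L')`; moreover `λ_a L`, `λ_a L'`, and
`L' a b / L' ι b` (for every `b`) all lie in
`[min_e L a e / L ι e, max_e L a e / L ι e]`. -/
theorem stmt8 {H : Type*} [Fintype H] [Nonempty H] (ι : H)
    (L M : H → H → ℝ) (hL : ∀ a b, 0 < L a b) (hM : ∀ a b, 0 < M a b)
    (ψ : H → ℝ) (hψ : ∀ b, 0 < ψ b) :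
    ∀ a : H,
      |lamRatio ι L a - lamRatio ι (fun a' b => ψ b * ∑ e, L a' e * M e b) a| ≤
          2 * Delta L + Delta (fun a' b => ψ b * ∑ e, L a' e * M e b) ∧
        lamRatio ι L a ∈ Set.Icc
          (Finset.univ.inf' Finset.univ_nonempty fun e => L a e / L ι e)
          (Finset.univ.sup' Finset.univ_nonempty fun e => L a e / L ι e) ∧
        lamRatio ι (fun a' b => ψ b * ∑ e, L a' e * M e b) a ∈ Set.Icc
          (Finset.univ.inf' Finset.univ_nonempty fun e => L a e / L ι e)
          (Finset.univ.sup' Finset.univ_nonempty fun e => L a e / L ι e) ∧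
        ∀ b : H,
          (ψ b * ∑ e, L a e * M e b) / (ψ b * ∑ e, L ι e * M e b) ∈ Set.Icc
            (Finset.univ.inf' Finset.univ_nonempty fun e => L a e / L ι e)
            (Finset.univ.sup' Finset.univ_nonempty fun e => L a e / L ι e) := by
  intro a
  set lo := Finset.univ.inf' Finset.univ_nonempty fun e => L a e / L ι e
  set hi := Finset.univ.sup' Finset.univ_nonempty fun e => L a e / L ι e
  have mediant := fun w hw =>
    sum_mul_div_sum_mul_mem_Icc Finset.univ_nonempty (L a) (L ι) w (fun e _ => hL ι e) hw
  have memL : lamRatio ι L a ∈ Set.Icc lo hi := by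
    simpa only [lamRatio, mul_one] using mediant (fun _ => 1) fun _ _ => one_pos
  have memL' : lamRatio ι (fun a' b => ψ b * ∑ e, L a' e * M e b) a ∈ Set.Icc lo hi := by
    rw [lamRatio, sum_mul_sum_comm ψ (L a), sum_mul_sum_comm ψ (L ι)]
    exact mediant _ fun e _ => Finset.sum_pos (fun b _ => mul_pos (hψ b) (hM e b))
      Finset.univ_nonempty
  refine ⟨?_, memL, memL', fun b => ?_⟩
  · have hdist := Real.dist_le_of_mem_Icc memL memL'
    rw [Real.dist_eq] at hdist
    linarith [sup'_sub_inf'_le_Delta L ι a, Delta_nonneg L,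
      Delta_nonneg fun a' b => ψ b * ∑ e, L a' e * M e b]
  · rw [mul_div_mul_left _ _ (hψ b).ne']
    exact mediant (fun e => M e b) fun e _ => hM e b
end

section
/- Let σ = (σ_0,…,σ_n) be a binary Markov chain as in the context, and for t = 1,…,n let ℓ_t : ℝ × {0,1} → ℝ be such that ε ↦ ℓ_t(ε,a) is twice differentiable for a = 0,1, with ℓ_t(0,1) = ℓ_t(0,0). Define d_t(ε) = ℓ_t(ε,1) − ℓ_t(ε,0), S_n(ε) = Σ_{t=1}^n ℓ_t(ε,σ_t), λ_n(ε) = ln E[e^{S_n(ε)} | σ_0 = 1] − ln E[e^{S_n(ε)} | σ_0 = 0], and for 1 ≤ s < t ≤ n, u_{st} = D_{0s}[D_{st}P_{0s}(0,0) − D_{0t}] d_s'(0) + D_{0s}D_{st} ℓ_s'(0,0) − D_{0t} E[ℓ_s'(0,σ_s) | σ_0 = 0], where ℓ_s'(0,a) denotes the ε-derivative of ℓ_s(·,a) at 0. Then λ_n''(0) = Σ_{t=1}^n D_{0t}{ d_t''(0) + [P_{0t}(1,0) − P_{0t}(0,1)] [d_t'(0)]^2 } + 2 Σ_{t=1}^n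 d_t'(0) Σ_{s=1}^{t−1} u_{st}. -/
/-!
Write `Z_a(ε) = E[exp S_n(ε) | σ₀ = a]`. Because `ℓ_t(0, ·)` is constant, `exp S_n(0)` is the
same for every path, so `(log Z_a)''(0)` is the conditional mean of `S_n''(0)` plus the
conditional variance of `S_n'(0) = ∑_t ℓ_t'(0, σ_t)`. Expanding that variance into covariances,
every term only involves the joint law of `(σ₀, σ_s, σ_t)`, i.e. products of transition matrices.
For two states, a row-stochastic `P` satisfies
`E[g(σ_t) | σ₀ = 1] - E[g(σ_t) | σ₀ = 0] = (P 1 1 - P 0 1) (g 1 - g 0)`, and the analogous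
computation for covariances turns `λ_n''(0) = (log Z_1)''(0) - (log Z_0)''(0)` into the stated sums.
-/

/-- The weight `π(v₀) ∏_{t=1}^n Q_t(v_{t−1}, v_t)` of a path `v` of a (possibly
time-inhomogeneous) binary Markov chain `σ₀, …, σ_n` with initial law `π` and one-step
transition matrices `Q_t`. -/
noncomputable def pathWeight (n : ℕ) (π : Fin 2 → ℝ) (Q : ℕ → Fin 2 → Fin 2 → ℝ)
    (v : Fin (n + 1) → Fin 2) : ℝ :=
  π (v 0) * ∏ t : Fin n, Q (t.1 + 1) (v t.castSucc) (v t.succ)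

/-- The conditional expectation `E[F(σ) | σ_s = a]`, a finite weighted sum over paths
with `σ_s = a`. -/
noncomputable def condExp' (n : ℕ) (π : Fin 2 → ℝ) (Q : ℕ → Fin 2 → Fin 2 → ℝ)
    (s : Fin (n + 1)) (a : Fin 2) (F : (Fin (n + 1) → Fin 2) → ℝ) : ℝ :=
  (∑ v : Fin (n + 1) → Fin 2, if v s = a then pathWeight n π Q v * F v else 0) /
    (∑ v : Fin (n + 1) → Fin 2, if v s = a then pathWeight n π Q v else 0)

/-- The conditional probability `P_{st}(a,b) = P(σ_t = b | σ_s = a)`. -/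
noncomputable def condProb (n : ℕ) (π : Fin 2 → ℝ) (Q : ℕ → Fin 2 → Fin 2 → ℝ)
    (s t : Fin (n + 1)) (a b : Fin 2) : ℝ :=
  condExp' n π Q s a fun v => if v t = b then 1 else 0

/-- `D_{st} = P_{st}(1,1) − P_{st}(0,1)`. -/
noncomputable def Dst (n : ℕ) (π : Fin 2 → ℝ) (Q : ℕ → Fin 2 → Fin 2 → ℝ)
    (s t : Fin (n + 1)) : ℝ :=
  condProb n π Q s t 1 1 - condProb n π Q s t 0 1

open Finset Matrix

section TransitionMatrix

variable {α R : Type*} [Fintype α] [DecidableEq α]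

/-- `transitionMatrix Q s (t - s)` is the paper's `P_{st}`: the product `Q (s + 1) ⋯ Q t`. -/
def transitionMatrix [Semiring R] (Q : ℕ → α → α → R) (s : ℕ) : ℕ → Matrix α α R
  | 0 => 1
  | k + 1 => transitionMatrix Q s k * of (Q (s + k + 1))

variable [Semiring R] (Q : ℕ → α → α → R)

theorem transitionMatrix_add (s j k : ℕ) :
    transitionMatrix Q s (j + k) = transitionMatrix Q s j * transitionMatrix Q (s + j) k := by
  induction k with
  | zero => simp [transitionMatrix]
  | succ k ih =>
    rw [← add_assoc, transitionMatrix, ih, transitionMatrix, Matrix.mul_assoc, add_assoc s j k]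

theorem transitionMatrix_eq_mul_of_le (s : ℕ) {j k : ℕ} (h : j ≤ k) :
    transitionMatrix Q s k = transitionMatrix Q s j * transitionMatrix Q (s + j) (k - j) := by
  rw [← transitionMatrix_add, Nat.add_sub_cancel' h]

theorem transitionMatrix_sum_row (hQ : ∀ t a, ∑ b, Q t a b = 1) (s k : ℕ) (a : α) :
    ∑ b, transitionMatrix Q s k a b = 1 := by
  induction k generalizing a with
  | zero => simp [transitionMatrix, one_apply]
  | succ k ih =>
    simp only [transitionMatrix, mul_apply, of_apply]
    rw [Finset.sum_comm]
    simp [← Finset.mul_sum, hQ, ih]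

end TransitionMatrix

theorem vecMul_transitionMatrix_pos {α : Type*} [Fintype α] [DecidableEq α] [Nonempty α]
    {π : α → ℝ} {Q : ℕ → α → α → ℝ} (hπ : ∀ a, 0 < π a) (hQpos : ∀ t a b, 0 < Q t a b)
    (s k : ℕ) (a : α) : 0 < (π ᵥ* transitionMatrix Q s k) a := by
  induction k generalizing a with
  | zero => simpa [transitionMatrix] using hπ a
  | succ k ih =>
    rw [transitionMatrix, ← vecMul_vecMul]
    exact Finset.sum_pos (fun b _ => mul_pos (ih b) (hQpos _ _ _)) univ_nonempty

section TwoState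

variable {P R : Matrix (Fin 2) (Fin 2) ℝ}

theorem apply_zero_eq_one_sub (hP : ∀ a, ∑ b, P a b = 1) (a : Fin 2) : P a 0 = 1 - P a 1 := by
  rw [← hP a, Fin.sum_univ_two, add_sub_cancel_right]

theorem mulVec_one_sub_mulVec_zero (hP : ∀ a, ∑ b, P a b = 1) (g : Fin 2 → ℝ) :
    (P *ᵥ g) 1 - (P *ᵥ g) 0 = (P 1 1 - P 0 1) * (g 1 - g 0) := by
  simp only [mulVec, dotProduct, Fin.sum_univ_two, apply_zero_eq_one_sub hP]
  ring

theorem cov_one_sub_cov_zero (hP : ∀ a, ∑ b, P a b = 1) (g h : Fin 2 → ℝ) :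
    (P *ᵥ (g * h)) 1 - (P *ᵥ g) 1 * (P *ᵥ h) 1 - ((P *ᵥ (g * h)) 0 - (P *ᵥ g) 0 * (P *ᵥ h) 0) =
      (P 1 1 - P 0 1) * (P 1 0 - P 0 1) * (g 1 - g 0) * (h 1 - h 0) := by
  simp only [mulVec, dotProduct, Fin.sum_univ_two, Pi.mul_apply, apply_zero_eq_one_sub hP]
  ring

theorem mean_add_var_one_sub_zero (hP : ∀ a, ∑ b, P a b = 1) (x y : Fin 2 → ℝ) :
    (P *ᵥ y) 1 + ((P *ᵥ (x * x)) 1 - (P *ᵥ x) 1 ^ 2) -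
        ((P *ᵥ y) 0 + ((P *ᵥ (x * x)) 0 - (P *ᵥ x) 0 ^ 2)) =
      (P 1 1 - P 0 1) * (y 1 - y 0 + (P 1 0 - P 0 1) * (x 1 - x 0) ^ 2) := by
  linear_combination mulVec_one_sub_mulVec_zero hP y + cov_one_sub_cov_zero hP x x

/-- With `P = P_{0s}` and `R = P_{st}`, the right-hand side is `(h 1 - h 0) * u_{st}` in the
paper's form. -/
theorem cov_mul_one_sub_zero (hP : ∀ a, ∑ b, P a b = 1) (hR : ∀ a, ∑ b, R a b = 1)
    (g h : Fin 2 → ℝ) :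
    (P *ᵥ (g * (R *ᵥ h))) 1 - (P *ᵥ g) 1 * ((P * R) *ᵥ h) 1 -
        ((P *ᵥ (g * (R *ᵥ h))) 0 - (P *ᵥ g) 0 * ((P * R) *ᵥ h) 0) =
      (h 1 - h 0) * ((P 1 1 - P 0 1) * ((R 1 1 - R 0 1) * P 0 0 - ((P * R) 1 1 - (P * R) 0 1)) *
          (g 1 - g 0) + (P 1 1 - P 0 1) * (R 1 1 - R 0 1) * g 0 -
        ((P * R) 1 1 - (P * R) 0 1) * (P *ᵥ g) 0) := by
  have hD : (P * R) 1 1 - (P * R) 0 1 = (P 1 1 - P 0 1) * (R 1 1 - R 0 1) :=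
    mulVec_one_sub_mulVec_zero hP fun b => R b 1
  rw [← mulVec_mulVec, cov_one_sub_cov_zero hP, mulVec_one_sub_mulVec_zero hR, hD]
  simp only [mulVec, dotProduct, Fin.sum_univ_two, apply_zero_eq_one_sub hP]
  ring

end TwoState

theorem sq_sum_eq_sum_sq_add_two_mul_sum_lt {ι R : Type*} [Fintype ι] [LinearOrder ι]
    [CommSemiring R] (x : ι → R) :
    (∑ i, x i) ^ 2 = ∑ i, x i ^ 2 + 2 * ∑ j, ∑ i ∈ univ.filter (· < j), x i * x j := by
  have split (i j : ι) : x i * x j = (if i < j then x i * x j else 0) +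
      (if i = j then x i * x j else 0) + (if j < i then x j * x i else 0) := by
    rcases lt_trichotomy i j with h | rfl | h
    · simp [h, h.ne, h.not_gt]
    · simp
    · simp [h, h.ne', h.not_gt, mul_comm]
  have swap : ∑ j, ∑ i, (if j < i then x j * x i else 0) =
      ∑ j, ∑ i, (if i < j then x i * x j else 0) := Finset.sum_comm
  rw [sq, Finset.sum_mul_sum, Finset.sum_comm,
    Finset.sum_congr rfl fun j _ => Finset.sum_congr rfl fun i _ => split i j]
  simp only [Finset.sum_add_distrib, swap, Finset.sum_ite_eq', Finset.mem_univ, if_true,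
    Finset.sum_filter, sq]
  ring

section MarkovChain

variable {π : Fin 2 → ℝ} {Q : ℕ → Fin 2 → Fin 2 → ℝ}

theorem pathWeight_snoc (n : ℕ) (w : Fin (n + 1) → Fin 2) (x : Fin 2) :
    pathWeight (n + 1) π Q (Fin.snoc w x) =
      pathWeight n π Q w * Q (n + 1) (w (Fin.last n)) x := by
  simp [pathWeight, Fin.prod_univ_castSucc, mul_assoc, -Fin.castSucc_succ, Fin.succ_castSucc]

theorem sum_pathWeight_snoc (n : ℕ) (G : (Fin (n + 2) → Fin 2) → ℝ) :
    ∑ v, pathWeight (n + 1) π Q v * G v =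
      ∑ w, pathWeight n π Q w * ∑ x, Q (n + 1) (w (Fin.last n)) x * G (Fin.snoc w x) := by
  have snoc_eq (p : Fin 2 × (Fin (n + 1) → Fin 2)) :
      Fin.snocEquiv (fun _ => Fin 2) p = Fin.snoc p.2 p.1 := rfl
  rw [← (Fin.snocEquiv fun _ => Fin 2).sum_comp, Fintype.sum_prod_type, Finset.sum_comm]
  simp only [snoc_eq, pathWeight_snoc, Finset.mul_sum, mul_assoc]

theorem sum_pathWeight_mul_marginal (hQ : ∀ t a, ∑ b, Q t a b = 1) {n : ℕ}
    {s t : Fin (n + 1)} (hst : s ≤ t) (F : Fin 2 → Fin 2 → Fin 2 → ℝ) :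
    ∑ v, pathWeight n π Q v * F (v 0) (v s) (v t) =
      ∑ a, ∑ b, ∑ c, π a * transitionMatrix Q 0 s a b * transitionMatrix Q s (t - s) b c *
        F a b c := by
  have row (t : ℕ) (c : Fin 2) (K : ℝ) : ∑ x, Q t c x * K = K := by
    rw [← sum_mul, hQ, one_mul]
  induction n generalizing F with
  | zero =>
    obtain rfl : s = 0 := Fin.fin_one_eq_zero s
    obtain rfl : t = 0 := Fin.fin_one_eq_zero t
    rw [← (Equiv.funUnique (Fin 1) (Fin 2)).symm.sum_comp]
    simp [pathWeight, transitionMatrix, one_apply, Fin.sum_univ_two]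
  | succ n ih =>
    rw [sum_pathWeight_snoc]
    induction t using Fin.lastCases with
    | last =>
      induction s using Fin.lastCases with
      | last =>
        calc _ = ∑ w, pathWeight n π Q w * (fun a b c => ∑ x, Q (n + 1) c x * F a x x)
                (w 0) (w (Fin.last n)) (w (Fin.last n)) := by simp
          _ = _ := ih le_rfl fun a b c => ∑ x, Q (n + 1) c x * F a x x
          _ = _ := by
            simp [transitionMatrix, Fin.sum_univ_two, mul_apply, one_apply]
            ring
      | cast s =>
        calc _ = ∑ w, pathWeight n π Q w * (fun a b c => ∑ x, Q (n + 1) c x * F a b x)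
                (w 0) (w s) (w (Fin.last n)) := by simp
          _ = _ := ih (Fin.le_last s) fun a b c => ∑ x, Q (n + 1) c x * F a b x
          _ = _ := by
            simp only [Fin.val_last, Fin.val_castSucc]
            rw [show n + 1 - s = n - s + 1 by omega]
            simp [transitionMatrix, Fin.sum_univ_two, mul_apply, show s + (n - s) = n by omega]
            ring
    | cast t =>
      obtain ⟨s, rfl⟩ : ∃ s' : Fin (n + 1), s = s'.castSucc :=
        ⟨s.castPred (Fin.ne_last_of_lt (lt_of_le_of_lt hst (Fin.castSucc_lt_last t))), by simp⟩
      simp only [← Fin.castSucc_zero, Fin.snoc_castSucc, row, Fin.val_castSucc]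
      exact ih (Fin.castSucc_le_castSucc_iff.mp hst) F

variable {n : ℕ}

theorem pathWeight_pos (hπ : ∀ a, 0 < π a) (hQpos : ∀ t a b, 0 < Q t a b)
    (v : Fin (n + 1) → Fin 2) : 0 < pathWeight n π Q v :=
  mul_pos (hπ _) (Finset.prod_pos fun _ _ => hQpos _ _ _)

theorem ite_pathWeight_nonneg (hπ : ∀ a, 0 < π a) (hQpos : ∀ t a b, 0 < Q t a b)
    (s : Fin (n + 1)) (a : Fin 2) (v : Fin (n + 1) → Fin 2) :
    0 ≤ if v s = a then pathWeight n π Q v else 0 := by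
  split_ifs
  exacts [(pathWeight_pos hπ hQpos v).le, le_rfl]

theorem sum_ite_pathWeight (hQ : ∀ t a, ∑ b, Q t a b = 1) (s : Fin (n + 1)) (a : Fin 2) :
    ∑ v, (if v s = a then pathWeight n π Q v else 0) = (π ᵥ* transitionMatrix Q 0 s) a := by
  have h := sum_pathWeight_mul_marginal (π := π) hQ (le_refl s)
    fun _ b _ => if b = a then (1 : ℝ) else 0
  simp only [mul_boole, Nat.sub_self, transitionMatrix, one_apply] at h
  simp [h, vecMul, dotProduct]

theorem sum_ite_pathWeight_zero (hQ : ∀ t a, ∑ b, Q t a b = 1) (a : Fin 2) :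
    ∑ v, (if v 0 = a then pathWeight n π Q v else 0) = π a := by
  simp [sum_ite_pathWeight hQ, transitionMatrix]

theorem sum_ite_pathWeight_mul (hQ : ∀ t a, ∑ b, Q t a b = 1) {s t : Fin (n + 1)} (hst : s ≤ t)
    (a : Fin 2) (G : Fin 2 → Fin 2 → ℝ) :
    ∑ v, (if v 0 = a then pathWeight n π Q v * G (v s) (v t) else 0) =
      π a * ∑ b, ∑ c, transitionMatrix Q 0 s a b * transitionMatrix Q s (t - s) b c * G b c := by
  have h := sum_pathWeight_mul_marginal (π := π) hQ hst
    fun a' b c => if a' = a then G b c else 0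
  simp only [mul_ite_zero] at h
  simp [h, mul_assoc]
  ring

theorem condExp'_zero_eq (hQ : ∀ t a, ∑ b, Q t a b = 1) {a : Fin 2} (ha : π a ≠ 0)
    {s t : Fin (n + 1)} (hst : s ≤ t) (G : Fin 2 → Fin 2 → ℝ) :
    condExp' n π Q 0 a (fun v => G (v s) (v t)) =
      ∑ b, ∑ c, transitionMatrix Q 0 s a b * transitionMatrix Q s (t - s) b c * G b c := by
  rw [condExp', sum_ite_pathWeight_mul hQ hst, sum_ite_pathWeight_zero hQ]
  field_simp

theorem condExp'_zero_mul (hQ : ∀ t a, ∑ b, Q t a b = 1) {a : Fin 2} (ha : π a ≠ 0)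
    {s t : Fin (n + 1)} (hst : s ≤ t) (g h : Fin 2 → ℝ) :
    condExp' n π Q 0 a (fun v => g (v s) * h (v t)) =
      (transitionMatrix Q 0 s *ᵥ (g * (transitionMatrix Q s (t - s) *ᵥ h))) a := by
  rw [condExp'_zero_eq hQ ha hst fun b c => g b * h c]
  simp only [mulVec, dotProduct, Pi.mul_apply, Finset.mul_sum]
  exact Finset.sum_congr rfl fun b _ => Finset.sum_congr rfl fun c _ => by ring

theorem condExp'_zero_apply (hQ : ∀ t a, ∑ b, Q t a b = 1) {a : Fin 2} (ha : π a ≠ 0)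
    (t : Fin (n + 1)) (g : Fin 2 → ℝ) :
    condExp' n π Q 0 a (fun v => g (v t)) = (transitionMatrix Q 0 t *ᵥ g) a := by
  simpa [transitionMatrix] using condExp'_zero_mul hQ ha (le_refl t) (fun _ => 1) g

theorem condProb_eq (hQ : ∀ t a, ∑ b, Q t a b = 1) {s t : Fin (n + 1)} (hst : s ≤ t) {a : Fin 2}
    (ha : (π ᵥ* transitionMatrix Q 0 s) a ≠ 0) (b : Fin 2) :
    condProb n π Q s t a b = transitionMatrix Q s (t - s) a b := by
  have h := sum_pathWeight_mul_marginal (π := π) hQ hst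
    fun _ x y => if x = a ∧ y = b then (1 : ℝ) else 0
  simp only [mul_boole] at h
  rw [condProb, condExp', sum_ite_pathWeight hQ]
  simp only [mul_ite, mul_one, mul_zero, ← ite_and]
  rw [h, div_eq_iff ha]
  simp [ite_and, vecMul, dotProduct]
  ring

theorem condProb_zero_succ (hπ : ∀ a, 0 < π a) (hQ : ∀ t a, ∑ b, Q t a b = 1) (t : Fin n)
    (a b : Fin 2) : condProb n π Q 0 t.succ a b = transitionMatrix Q 0 (t.1 + 1) a b := by
  rw [condProb_eq hQ (Fin.zero_le _) (by simpa [transitionMatrix] using (hπ a).ne'),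
    Fin.val_succ, Fin.val_zero, Nat.sub_zero]

theorem condProb_succ_succ (hπ : ∀ a, 0 < π a) (hQpos : ∀ t a b, 0 < Q t a b)
    (hQ : ∀ t a, ∑ b, Q t a b = 1) {s t : Fin n} (hst : s < t) (a b : Fin 2) :
    condProb n π Q s.succ t.succ a b = transitionMatrix Q (s.1 + 1) (t.1 - s.1) a b := by
  rw [condProb_eq hQ (Fin.succ_le_succ_iff.2 hst.le)
      (vecMul_transitionMatrix_pos hπ hQpos _ _ a).ne',
    Fin.val_succ, Fin.val_succ, Nat.add_sub_add_right]

section Linear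

variable {s : Fin (n + 1)} {a : Fin 2}

theorem condExp'_eq_div (F : (Fin (n + 1) → Fin 2) → ℝ) :
    condExp' n π Q s a F = (∑ v, (if v s = a then pathWeight n π Q v else 0) * F v) /
      ∑ v, (if v s = a then pathWeight n π Q v else 0) := by
  simp only [condExp', ite_zero_mul]

theorem condExp'_add (F G : (Fin (n + 1) → Fin 2) → ℝ) :
    condExp' n π Q s a (fun v => F v + G v) = condExp' n π Q s a F + condExp' n π Q s a G := by
  simp only [condExp'_eq_div, mul_add, Finset.sum_add_distrib, add_div]

theorem condExp'_const_mul (c : ℝ) (F : (Fin (n + 1) → Fin 2) → ℝ) :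
    condExp' n π Q s a (fun v => c * F v) = c * condExp' n π Q s a F := by
  simp only [condExp'_eq_div, mul_left_comm _ c, ← Finset.mul_sum, mul_div_assoc]

theorem condExp'_sum {κ : Type*} (S : Finset κ) (F : κ → (Fin (n + 1) → Fin 2) → ℝ) :
    condExp' n π Q s a (fun v => ∑ k ∈ S, F k v) = ∑ k ∈ S, condExp' n π Q s a (F k) := by
  simp only [condExp'_eq_div, Finset.mul_sum, Finset.sum_div]
  exact Finset.sum_comm

theorem condExp'_sq_sum_sub_sq {κ : Type*} [Fintype κ] [LinearOrder κ]
    (X : κ → (Fin (n + 1) → Fin 2) → ℝ) :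
    condExp' n π Q s a (fun v => (∑ t, X t v) ^ 2) -
        condExp' n π Q s a (fun v => ∑ t, X t v) ^ 2 =
      ∑ t, (condExp' n π Q s a (fun v => X t v * X t v) - condExp' n π Q s a (X t) ^ 2) +
        2 * ∑ t, ∑ u ∈ univ.filter (· < t),
          (condExp' n π Q s a (fun v => X u v * X t v) -
            condExp' n π Q s a (X u) * condExp' n π Q s a (X t)) := by
  simp only [sq_sum_eq_sum_sq_add_two_mul_sum_lt, sq (X _ _), condExp'_add, condExp'_const_mul,
    condExp'_sum, Finset.sum_sub_distrib]
  ring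

end Linear

theorem condExp'_mean_add_var (hQ : ∀ t a, ∑ b, Q t a b = 1) {a : Fin 2} (ha : π a ≠ 0)
    (X Y : Fin n → Fin 2 → ℝ) :
    condExp' n π Q 0 a (fun v => ∑ t, Y t (v t.succ) + (∑ t, X t (v t.succ)) ^ 2) -
        condExp' n π Q 0 a (fun v => ∑ t, X t (v t.succ)) ^ 2 =
      ∑ t : Fin n, ((transitionMatrix Q 0 (t.1 + 1) *ᵥ Y t) a +
          ((transitionMatrix Q 0 (t.1 + 1) *ᵥ (X t * X t)) a -
            (transitionMatrix Q 0 (t.1 + 1) *ᵥ X t) a ^ 2)) +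
        2 * ∑ t : Fin n, ∑ s ∈ univ.filter (· < t),
          ((transitionMatrix Q 0 (s.1 + 1) *ᵥ
              (X s * (transitionMatrix Q (s.1 + 1) (t.1 - s.1) *ᵥ X t))) a -
            (transitionMatrix Q 0 (s.1 + 1) *ᵥ X s) a *
              (transitionMatrix Q 0 (t.1 + 1) *ᵥ X t) a) := by
  rw [condExp'_add, add_sub_assoc, condExp'_sq_sum_sub_sq, condExp'_sum, ← add_assoc,
    ← Finset.sum_add_distrib]
  congr 1
  · refine Finset.sum_congr rfl fun t _ => ?_
    rw [condExp'_zero_apply hQ ha, condExp'_zero_apply hQ ha, condExp'_zero_mul hQ ha le_rfl]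
    simp [transitionMatrix]
  · refine congrArg _ (Finset.sum_congr rfl fun t _ => Finset.sum_congr rfl fun s hs => ?_)
    have hst : s.succ ≤ t.succ := Fin.succ_le_succ_iff.2 (mem_filter.1 hs).2.le
    rw [condExp'_zero_mul hQ ha hst, condExp'_zero_apply hQ ha, condExp'_zero_apply hQ ha]
    simp

end MarkovChain

section LogMeanExp

open Real

variable {ι : Type*} [Fintype ι] {w : ι → ℝ} {f f' f'' : ι → ℝ → ℝ}

theorem sum_mul_exp_pos (hw : ∀ i, 0 ≤ w i) (hW : 0 < ∑ i, w i) (g : ι → ℝ) :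
    0 < ∑ i, w i * exp (g i) := by
  obtain ⟨i, -, hi⟩ := Finset.exists_lt_of_sum_lt (by simpa using hW : ∑ i, (0 : ℝ) < ∑ i, w i)
  exact Finset.sum_pos' (fun j _ => mul_nonneg (hw j) (exp_pos _).le)
    ⟨i, mem_univ i, mul_pos hi (exp_pos _)⟩

theorem hasDerivAt_log_mean_exp (hw : ∀ i, 0 ≤ w i) (hW : 0 < ∑ i, w i)
    (hf : ∀ i x, HasDerivAt (f i) (f' i x) x) (x : ℝ) :
    HasDerivAt (fun ε => log ((∑ i, w i * exp (f i ε)) / ∑ i, w i))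
      ((∑ i, w i * (exp (f i x) * f' i x)) / ∑ i, w i * exp (f i x)) x := by
  have hsum : HasDerivAt (fun ε => ∑ i, w i * exp (f i ε))
      (∑ i, w i * (exp (f i x) * f' i x)) x :=
    HasDerivAt.fun_sum fun i _ => ((hf i x).exp).const_mul (w i)
  convert (hsum.div_const (∑ i, w i)).log (div_pos (sum_mul_exp_pos hw hW _) hW).ne' using 1
  field_simp

theorem hasDerivAt_deriv_log_mean_exp (hw : ∀ i, 0 ≤ w i) (hW : 0 < ∑ i, w i)
    (hf : ∀ i x, HasDerivAt (f i) (f' i x) x) (hf' : ∀ i x, HasDerivAt (f' i) (f'' i x) x)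
    {c : ℝ} (hc : ∀ i, f i 0 = c) :
    HasDerivAt (deriv fun ε => log ((∑ i, w i * exp (f i ε)) / ∑ i, w i))
      ((∑ i, w i * (f'' i 0 + f' i 0 ^ 2)) / (∑ i, w i) -
        ((∑ i, w i * f' i 0) / ∑ i, w i) ^ 2) 0 := by
  have hnum : HasDerivAt (fun x => ∑ i, w i * (exp (f i x) * f' i x))
      (∑ i, w i * (exp (f i 0) * f' i 0 * f' i 0 + exp (f i 0) * f'' i 0)) 0 :=
    HasDerivAt.fun_sum fun i _ => (((hf i 0).exp).mul (hf' i 0)).const_mul (w i)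
  have hden : HasDerivAt (fun x => ∑ i, w i * exp (f i x))
      (∑ i, w i * (exp (f i 0) * f' i 0)) 0 :=
    HasDerivAt.fun_sum fun i _ => ((hf i 0).exp).const_mul (w i)
  rw [funext fun x => (hasDerivAt_log_mean_exp hw hW hf x).deriv]
  refine (hnum.div hden (sum_mul_exp_pos hw hW fun i => f i 0).ne').congr_deriv ?_
  simp only [hc]
  have e2 : ∑ i, w i * (exp c * f' i 0 * f' i 0 + exp c * f'' i 0) =
      exp c * ∑ i, w i * (f'' i 0 + f' i 0 ^ 2) := by
    rw [Finset.mul_sum]; exact Finset.sum_congr rfl fun i _ => by ring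
  have e1 : ∑ i, w i * (exp c * f' i 0) = exp c * ∑ i, w i * f' i 0 := by
    rw [Finset.mul_sum]; exact Finset.sum_congr rfl fun i _ => by ring
  have e0 : ∑ i, w i * exp c = exp c * ∑ i, w i := by
    rw [Finset.mul_sum]; simp only [mul_comm]
  rw [e2, e1, e0]
  field_simp

end LogMeanExp

theorem deriv_deriv_sub {f g : ℝ → ℝ} (hf : Differentiable ℝ f) (hg : Differentiable ℝ g) {x : ℝ}
    (hf' : DifferentiableAt ℝ (deriv f) x) (hg' : DifferentiableAt ℝ (deriv g) x) :
    deriv (deriv fun ε => f ε - g ε) x = deriv (deriv f) x - deriv (deriv g) x := by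
  have h : (deriv fun ε => f ε - g ε) = fun ε => deriv f ε - deriv g ε :=
    funext fun ε => deriv_fun_sub (hf ε) (hg ε)
  rw [h, deriv_fun_sub hf' hg']

section LogPartition

variable {n : ℕ} {π : Fin 2 → ℝ} {Q : ℕ → Fin 2 → Fin 2 → ℝ} {ℓ : ℕ → ℝ → Fin 2 → ℝ}

/-- `λ_n(ε) = logPartition n π Q ℓ 1 ε - logPartition n π Q ℓ 0 ε`. -/
noncomputable def logPartition (n : ℕ) (π : Fin 2 → ℝ) (Q : ℕ → Fin 2 → Fin 2 → ℝ)
    (ℓ : ℕ → ℝ → Fin 2 → ℝ) (a : Fin 2) (ε : ℝ) : ℝ :=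
  Real.log (condExp' n π Q 0 a fun v => Real.exp (∑ t : Fin n, ℓ (t.1 + 1) ε (v t.succ)))

theorem logPartition_eq (a : Fin 2) :
    logPartition n π Q ℓ a = fun ε =>
      Real.log ((∑ v, (if v 0 = a then pathWeight n π Q v else 0) *
          Real.exp (∑ t : Fin n, ℓ (t.1 + 1) ε (v t.succ))) /
        ∑ v, (if v 0 = a then pathWeight n π Q v else 0)) :=
  funext fun _ => by rw [logPartition, condExp'_eq_div]

variable (hπ : ∀ a, 0 < π a) (hQpos : ∀ t a b, 0 < Q t a b) (hQ : ∀ t a, ∑ b, Q t a b = 1)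
  (hdiff : ∀ t ∈ Icc 1 n, ∀ a, Differentiable ℝ fun ε => ℓ t ε a)
include hπ hQpos hQ hdiff

theorem differentiable_logPartition (a : Fin 2) :
    Differentiable ℝ (logPartition n π Q ℓ a) := by
  rw [logPartition_eq]
  exact fun x => (hasDerivAt_log_mean_exp (ite_pathWeight_nonneg hπ hQpos 0 a)
    (by rw [sum_ite_pathWeight_zero hQ]; exact hπ a)
    (f' := fun v x => ∑ t : Fin n, deriv (fun ε => ℓ (t.1 + 1) ε (v t.succ)) x)
    (fun v x => HasDerivAt.fun_sum fun t _ =>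
      (hdiff (t.1 + 1) (mem_Icc.2 ⟨by omega, t.isLt⟩) _ x).hasDerivAt) x).differentiableAt

theorem hasDerivAt_deriv_logPartition
    (hdiff2 : ∀ t ∈ Icc 1 n, ∀ a, Differentiable ℝ (deriv fun ε => ℓ t ε a))
    (h0 : ∀ t ∈ Icc 1 n, ℓ t 0 1 = ℓ t 0 0) (a : Fin 2) :
    HasDerivAt (deriv (logPartition n π Q ℓ a))
      (condExp' n π Q 0 a (fun v =>
          ∑ t : Fin n, deriv (deriv fun ε => ℓ (t.1 + 1) ε (v t.succ)) 0 +
            (∑ t : Fin n, deriv (fun ε => ℓ (t.1 + 1) ε (v t.succ)) 0) ^ 2) -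
        condExp' n π Q 0 a (fun v =>
          ∑ t : Fin n, deriv (fun ε => ℓ (t.1 + 1) ε (v t.succ)) 0) ^ 2) 0 := by
  have hmem (t : Fin n) : t.1 + 1 ∈ Icc 1 n := mem_Icc.2 ⟨by omega, t.isLt⟩
  have hconst (v : Fin (n + 1) → Fin 2) :
      ∑ t : Fin n, ℓ (t.1 + 1) 0 (v t.succ) = ∑ t : Fin n, ℓ (t.1 + 1) 0 0 :=
    Finset.sum_congr rfl fun t _ =>
      (Fin.forall_fin_two (p := fun b => ℓ (t.1 + 1) 0 b = ℓ (t.1 + 1) 0 0)).2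
        ⟨rfl, h0 _ (hmem t)⟩ _
  have key := hasDerivAt_deriv_log_mean_exp (ite_pathWeight_nonneg hπ hQpos 0 a)
    (by rw [sum_ite_pathWeight_zero hQ]; exact hπ a)
    (f := fun v ε => ∑ t : Fin n, ℓ (t.1 + 1) ε (v t.succ))
    (f' := fun v x => ∑ t : Fin n, deriv (fun ε => ℓ (t.1 + 1) ε (v t.succ)) x)
    (f'' := fun v x => ∑ t : Fin n, deriv (deriv fun ε => ℓ (t.1 + 1) ε (v t.succ)) x)
    (fun v x => HasDerivAt.fun_sum fun t _ => (hdiff _ (hmem t) _ x).hasDerivAt)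
    (fun v x => HasDerivAt.fun_sum fun t _ => (hdiff2 _ (hmem t) _ x).hasDerivAt) hconst
  rw [logPartition_eq, condExp'_eq_div, condExp'_eq_div]
  exact key

end LogPartition

theorem stmt11_general (n : ℕ) (π : Fin 2 → ℝ) (Q : ℕ → Fin 2 → Fin 2 → ℝ)
    (hπ : ∀ a, 0 < π a)
    (hQpos : ∀ t a b, 0 < Q t a b) (hQrow : ∀ t a, Q t a 0 + Q t a 1 = 1)
    (ℓ : ℕ → ℝ → Fin 2 → ℝ)
    (hdiff : ∀ t ∈ Finset.Icc 1 n, ∀ a, Differentiable ℝ fun ε => ℓ t ε a)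
    (hdiff2 : ∀ t ∈ Finset.Icc 1 n, ∀ a, Differentiable ℝ (deriv fun ε => ℓ t ε a))
    (h0 : ∀ t ∈ Finset.Icc 1 n, ℓ t 0 1 = ℓ t 0 0) :
    deriv (deriv (fun ε =>
        Real.log (condExp' n π Q 0 1 fun v =>
          Real.exp (∑ t : Fin n, ℓ (t.1 + 1) ε (v t.succ))) -
        Real.log (condExp' n π Q 0 0 fun v =>
          Real.exp (∑ t : Fin n, ℓ (t.1 + 1) ε (v t.succ))))) 0 =
      (∑ t : Fin n, Dst n π Q 0 t.succ *
        (deriv (deriv fun ε => ℓ (t.1 + 1) ε 1 - ℓ (t.1 + 1) ε 0) 0 +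
          (condProb n π Q 0 t.succ 1 0 - condProb n π Q 0 t.succ 0 1) *
            (deriv (fun ε => ℓ (t.1 + 1) ε 1 - ℓ (t.1 + 1) ε 0) 0) ^ 2)) +
      2 * ∑ t : Fin n, deriv (fun ε => ℓ (t.1 + 1) ε 1 - ℓ (t.1 + 1) ε 0) 0 *
        ∑ s ∈ Finset.univ.filter (fun s : Fin n => s < t),
          (Dst n π Q 0 s.succ *
              (Dst n π Q s.succ t.succ * condProb n π Q 0 s.succ 0 0 -
                Dst n π Q 0 t.succ) *
              deriv (fun ε => ℓ (s.1 + 1) ε 1 - ℓ (s.1 + 1) ε 0) 0 +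
            Dst n π Q 0 s.succ * Dst n π Q s.succ t.succ *
              deriv (fun ε => ℓ (s.1 + 1) ε 0) 0 -
            Dst n π Q 0 t.succ *
              condExp' n π Q 0 0 (fun v =>
                deriv (fun ε => ℓ (s.1 + 1) ε (v s.succ)) 0)) := by
  have hQ (t : ℕ) (a : Fin 2) : ∑ b, Q t a b = 1 := by rw [Fin.sum_univ_two, hQrow]
  have hmem (t : Fin n) : t.1 + 1 ∈ Finset.Icc 1 n := mem_Icc.2 ⟨by omega, t.isLt⟩
  have hK (a : Fin 2) := condExp'_mean_add_var hQ (hπ a).ne'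
    (fun t b => deriv (fun ε => ℓ (t.1 + 1) ε b) 0)
    (fun t b => deriv (deriv fun ε => ℓ (t.1 + 1) ε b) 0) ▸
      hasDerivAt_deriv_logPartition hπ hQpos hQ hdiff hdiff2 h0 a
  have hd' (t : Fin n) := deriv_fun_sub (hdiff _ (hmem t) 1 0) (hdiff _ (hmem t) 0 0)
  have hd'' (t : Fin n) := deriv_deriv_sub (hdiff _ (hmem t) 1) (hdiff _ (hmem t) 0)
    (hdiff2 _ (hmem t) 1 0) (hdiff2 _ (hmem t) 0 0)
  change deriv (deriv fun ε => logPartition n π Q ℓ 1 ε - logPartition n π Q ℓ 0 ε) 0 = _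
  rw [deriv_deriv_sub (differentiable_logPartition hπ hQpos hQ hdiff 1)
    (differentiable_logPartition hπ hQpos hQ hdiff 0) (hK 1).differentiableAt
    (hK 0).differentiableAt, (hK 1).deriv, (hK 0).deriv, add_sub_add_comm, ← mul_sub,
    ← Finset.sum_sub_distrib, ← Finset.sum_sub_distrib]
  congr 1
  · refine Finset.sum_congr rfl fun t _ => ?_
    simp only [Dst, condProb_zero_succ hπ hQ, hd', hd'']
    exact mean_add_var_one_sub_zero (transitionMatrix_sum_row _ hQ _ _) _ _
  · refine congrArg _ (Finset.sum_congr rfl fun t _ => ?_)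
    rw [← Finset.sum_sub_distrib, Finset.mul_sum]
    refine Finset.sum_congr rfl fun s hs => ?_
    have hst : s < t := (mem_filter.1 hs).2
    simp only [Dst, condProb_zero_succ hπ hQ, condProb_succ_succ hπ hQpos hQ hst, hd',
      condExp'_zero_apply hQ (hπ 0).ne' s.succ fun b => deriv (fun ε => ℓ (s.1 + 1) ε b) 0,
      Fin.val_succ, transitionMatrix_eq_mul_of_le Q 0 (by omega : s.1 + 1 ≤ t.1 + 1), zero_add,
      Nat.add_sub_add_right]
    exact cov_mul_one_sub_zero (transitionMatrix_sum_row _ hQ _ _)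
      (transitionMatrix_sum_row _ hQ _ _) _ _

/-- For a binary Markov chain `σ = (σ₀,…,σ_n)` as above and
`ℓ t (ε, a)` twice differentiable in `ε` with `ℓ t (0,1) = ℓ t (0,0)` for
`t = 1,…,n`, the quantity
`λ_n(ε) = ln E[e^{S_n(ε)} | σ₀ = 1] − ln E[e^{S_n(ε)} | σ₀ = 0]` satisfies
`λ_n''(0) = ∑_{t=1}^n D_{0t} { d_t''(0) + [P_{0t}(1,0) − P_{0t}(0,1)] d_t'(0)² }
  + 2 ∑_{t=1}^n d_t'(0) ∑_{s=1}^{t−1} u_{st}`, where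
`u_{st} = D_{0s}[D_{st} P_{0s}(0,0) − D_{0t}] d_s'(0) + D_{0s} D_{st} ℓ_s'(0,0)
  − D_{0t} E[ℓ_s'(0,σ_s) | σ₀ = 0]`. -/
theorem stmt11 (n : ℕ) (π : Fin 2 → ℝ) (Q : ℕ → Fin 2 → Fin 2 → ℝ)
    (hπ : ∀ a, 0 < π a) (hπsum : π 0 + π 1 = 1)
    (hQpos : ∀ t a b, 0 < Q t a b) (hQrow : ∀ t a, Q t a 0 + Q t a 1 = 1)
    (ℓ : ℕ → ℝ → Fin 2 → ℝ)
    (hdiff : ∀ t ∈ Finset.Icc 1 n, ∀ a, Differentiable ℝ fun ε => ℓ t ε a)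
    (hdiff2 : ∀ t ∈ Finset.Icc 1 n, ∀ a, Differentiable ℝ (deriv fun ε => ℓ t ε a))
    (h0 : ∀ t ∈ Finset.Icc 1 n, ℓ t 0 1 = ℓ t 0 0) :
    deriv (deriv (fun ε =>
        Real.log (condExp' n π Q 0 1 fun v =>
          Real.exp (∑ t : Fin n, ℓ (t.1 + 1) ε (v t.succ))) -
        Real.log (condExp' n π Q 0 0 fun v =>
          Real.exp (∑ t : Fin n, ℓ (t.1 + 1) ε (v t.succ))))) 0 =
      (∑ t : Fin n, Dst n π Q 0 t.succ *
        (deriv (deriv fun ε => ℓ (t.1 + 1) ε 1 - ℓ (t.1 + 1) ε 0) 0 +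
          (condProb n π Q 0 t.succ 1 0 - condProb n π Q 0 t.succ 0 1) *
            (deriv (fun ε => ℓ (t.1 + 1) ε 1 - ℓ (t.1 + 1) ε 0) 0) ^ 2)) +
      2 * ∑ t : Fin n, deriv (fun ε => ℓ (t.1 + 1) ε 1 - ℓ (t.1 + 1) ε 0) 0 *
        ∑ s ∈ Finset.univ.filter (fun s : Fin n => s < t),
          (Dst n π Q 0 s.succ *
              (Dst n π Q s.succ t.succ * condProb n π Q 0 s.succ 0 0 -
                Dst n π Q 0 t.succ) *
              deriv (fun ε => ℓ (s.1 + 1) ε 1 - ℓ (s.1 + 1) ε 0) 0 +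
            Dst n π Q 0 s.succ * Dst n π Q s.succ t.succ *
              deriv (fun ε => ℓ (s.1 + 1) ε 0) 0 -
            Dst n π Q 0 t.succ *
              condExp' n π Q 0 0 (fun v =>
                deriv (fun ε => ℓ (s.1 + 1) ε (v s.succ)) 0)) :=
  stmt11_general n π Q hπ hQpos hQrow ℓ hdiff hdiff2 h0
end
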